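/- arXiv:1903.08897 — 2 statements merged into one kernel-verified Lean document; each statement's English description precedes it below -/
import Mathlib

section
/- (Theorem 2.2) Let H, J, K be 4×4 real matrices satisfying the Hamiltonian conditions H² = J² = K² = HJK = −E, with associated block map P. Let A ∈ ℍ^{m×n} and b ∈ ℍ^{m×1}, so that P(A) ∈ ℝ^{4m×4n} has columns a₁,…,a_{4n} and P(b) ∈ ℝ^{4m×4} has columns b₁, b₂, b₃, b₄. If some column b_t (1 ≤ t ≤ 4) is a real linear combination of a₁,…,a_{4n}, then each of the four columns b₁, b₂, b₃, b₄ is a real linear combination of a₁,…,a_{4n}. -/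
/-!
Given the Hamiltonian relations, `Q` is an `ℝ`-algebra homomorphism `ℍ → ℝ^{4×4}`. Since `ℍ` is a
division ring, `q ↦ Q(q) eₜ` is injective, hence by dimension a linear bijection `ℍ → ℝ⁴`, and it
intertwines left multiplication: `Q(a) (Q(q) eₜ) = Q(aq) eₜ`. Writing `x` blockwise as `(Q(yⱼ) eₜ)ⱼ`,
the system `P(A) x = P(b) eₜ` becomes the quaternion system `A y = b`, whose solvability does not
depend on `t`.
-/

open Matrix

/-- The real `4×4` matrix representation of a quaternion determined by matrices
`H, J, K` (assumed to satisfy the Hamiltonian conditions). -/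
noncomputable def qRep (H J K : Matrix (Fin 4) (Fin 4) ℝ) (q : Quaternion ℝ) :
    Matrix (Fin 4) (Fin 4) ℝ :=
  q.re • (1 : Matrix (Fin 4) (Fin 4) ℝ) + q.imI • H + q.imJ • J + q.imK • K

/-- The block real matrix representation of a quaternion matrix: the `(s,t)` block
of `pRep H J K A` is `qRep H J K (A s t)`. -/
noncomputable def pRep (H J K : Matrix (Fin 4) (Fin 4) ℝ) {m n : ℕ}
    (A : Matrix (Fin m) (Fin n) (Quaternion ℝ)) :
    Matrix (Fin m × Fin 4) (Fin n × Fin 4) ℝ :=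
  Matrix.of fun p q => qRep H J K (A p.1 q.1) p.2 q.2

section BlockRep

variable {R D : Type*} [CommRing R] [Ring D] [Algebra R D]
  {ι : Type*} [Fintype ι] [DecidableEq ι] (ρ : D →ₐ[R] Matrix ι ι R)
  {m n : Type*} [Fintype n]

def blockRep (A : Matrix m n D) : Matrix (m × ι) (n × ι) R :=
  of fun p q => ρ (A p.1 q.1) p.2 q.2

def blockVec (v : ι → R) (y : n → D) : n × ι → R :=
  fun p => (ρ (y p.1) *ᵥ v) p.2

theorem blockRep_mulVec_blockVec (A : Matrix m n D) (v : ι → R) (y : n → D) :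
    blockRep ρ A *ᵥ blockVec ρ v y = blockVec ρ v (A *ᵥ y) := by
  ext ⟨s, i⟩
  calc (blockRep ρ A *ᵥ blockVec ρ v y) (s, i)
      = ∑ j, (ρ (A s j) *ᵥ (ρ (y j) *ᵥ v)) i := by
        simp only [mulVec, dotProduct, Fintype.sum_prod_type, blockRep, blockVec, of_apply]
    _ = (ρ (∑ j, A s j * y j) *ᵥ v) i := by
        simp only [mulVec_mulVec, ← map_mul, map_sum, sum_mulVec, Finset.sum_apply]

theorem blockRep_col {k : Type*} (B : Matrix m k D) (c : k) (i : ι) :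
    (fun row => blockRep ρ B row (c, i)) = blockVec ρ (Pi.single i 1) (fun s => B s c) := by
  ext ⟨s, r⟩
  simp [blockRep, blockVec]

end BlockRep

section DivisionAlgebra

variable {R D : Type*} [Field R] [DivisionRing D] [Algebra R D]
  {ι : Type*} [Fintype ι] [DecidableEq ι] (ρ : D →ₐ[R] Matrix ι ι R) {v : ι → R} {n : Type*}

theorem mulVec_orbit_injective (hv : v ≠ 0) : Function.Injective fun q => ρ q *ᵥ v := by
  intro p q hpq
  by_contra hne
  have hsub : ρ (p - q) *ᵥ v = 0 := by
    simp only [map_sub, sub_mulVec]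
    exact sub_eq_zero.mpr hpq
  apply hv
  calc v = ρ ((p - q)⁻¹ * (p - q)) *ᵥ v := by
        rw [inv_mul_cancel₀ (sub_ne_zero.mpr hne), map_one, one_mulVec]
    _ = 0 := by rw [map_mul, ← mulVec_mulVec, hsub, mulVec_zero]

theorem blockVec_injective (hv : v ≠ 0) : Function.Injective (blockVec ρ v : (n → D) → _) := by
  intro y y' h
  funext j
  exact mulVec_orbit_injective ρ hv (funext fun r => congrFun h (j, r))

variable [FiniteDimensional R D] (hdim : Module.finrank R D = Fintype.card ι)
include hdim

theorem mulVec_orbit_surjective (hv : v ≠ 0) : Function.Surjective fun q => ρ q *ᵥ v := by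
  let f : D →ₗ[R] ι → R := (mulVecBilin R R).flip v ∘ₗ ρ.toLinearMap
  exact (LinearMap.injective_iff_surjective_of_finrank_eq_finrank (f := f)
    (by simp [hdim])).mp (mulVec_orbit_injective ρ hv)

theorem blockVec_surjective (hv : v ≠ 0) : Function.Surjective (blockVec ρ v : (n → D) → _) := by
  intro x
  choose y hy using fun j => mulVec_orbit_surjective ρ hdim hv fun r => x (j, r)
  exact ⟨y, funext fun p => congrFun (hy p.1) p.2⟩

theorem exists_blockRep_mulVec_eq_col_iff {m k : Type*} [Fintype n] (A : Matrix m n D)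
    (B : Matrix m k D) (c : k) (i : ι) :
    (∃ x, blockRep ρ A *ᵥ x = fun row => blockRep ρ B row (c, i)) ↔
      ∃ y, A *ᵥ y = fun s => B s c := by
  have hv : (Pi.single i 1 : ι → R) ≠ 0 := by simp
  constructor
  · rintro ⟨x, hx⟩
    obtain ⟨y, rfl⟩ := blockVec_surjective ρ hdim hv x
    rw [blockRep_mulVec_blockVec, blockRep_col] at hx
    exact ⟨y, blockVec_injective ρ hv hx⟩
  · rintro ⟨y, hy⟩
    exact ⟨blockVec ρ (Pi.single i 1) y, by rw [blockRep_mulVec_blockVec, hy, blockRep_col]⟩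

end DivisionAlgebra

theorem hamilton_mul_eq_and_mul_eq_neg {α : Type*} [Ring α] {h j k : α} (hh : h * h = -1)
    (hj : j * j = -1) (hk : k * k = -1) (hhjk : h * j * k = -1) : h * j = k ∧ j * h = -k := by
  have hhj : h * j = k := by
    calc h * j = -(h * j * k * k) := by rw [mul_assoc (h * j), hk]; noncomm_ring
      _ = k := by rw [hhjk]; noncomm_ring
  refine ⟨hhj, ?_⟩
  calc j * h = h * h * (j * h) * (j * j) := by rw [hh, hj]; noncomm_ring
    _ = h * (h * j * (h * j)) * j := by noncomm_ring
    _ = -k := by rw [hhj, hk, ← hhj]; noncomm_ring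

section Hamilton

variable {H J K : Matrix (Fin 4) (Fin 4) ℝ}
  (hH : H * H = -1) (hJ : J * J = -1) (hK : K * K = -1) (hHJK : H * J * K = -1)
include hH hJ hK hHJK

noncomputable def qRepBasis :
    QuaternionAlgebra.Basis (Matrix (Fin 4) (Fin 4) ℝ) (-1 : ℝ) 0 (-1) where
  i := H
  j := J
  k := K
  i_mul_i := by rw [hH]; simp
  j_mul_j := by rw [hJ]; simp
  i_mul_j := (hamilton_mul_eq_and_mul_eq_neg hH hJ hK hHJK).1
  j_mul_i := by rw [(hamilton_mul_eq_and_mul_eq_neg hH hJ hK hHJK).2]; simp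

noncomputable def qRepAlgHom : Quaternion ℝ →ₐ[ℝ] Matrix (Fin 4) (Fin 4) ℝ :=
  (qRepBasis hH hJ hK hHJK).liftHom

theorem qRepAlgHom_apply (q : Quaternion ℝ) : qRepAlgHom hH hJ hK hHJK q = qRep H J K q := by
  change algebraMap ℝ _ q.re + q.imI • H + q.imJ • J + q.imK • K = _
  rw [Algebra.algebraMap_eq_smul_one]
  rfl

theorem pRep_eq_blockRep {m n : ℕ} (A : Matrix (Fin m) (Fin n) (Quaternion ℝ)) :
    pRep H J K A = blockRep (qRepAlgHom hH hJ hK hHJK) A := by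
  ext
  simp [pRep, blockRep, qRepAlgHom_apply]

end Hamilton

/-- Theorem 2.2: if one column of `P(b)` (for `b ∈ ℍ^{m×1}`) is a
real linear combination of the columns of `P(A)`, then so are all four columns. -/
theorem pRep_col_span (H J K : Matrix (Fin 4) (Fin 4) ℝ)
    (hH : H * H = -1) (hJ : J * J = -1) (hK : K * K = -1)
    (hHJK : H * J * K = -1) {m n : ℕ}
    (A : Matrix (Fin m) (Fin n) (Quaternion ℝ))
    (b : Matrix (Fin m) (Fin 1) (Quaternion ℝ))
    (t : Fin 1 × Fin 4)
    (h : ∃ x : Fin n × Fin 4 → ℝ,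
      (pRep H J K A).mulVec x = fun row => pRep H J K b row t) :
    ∀ t' : Fin 1 × Fin 4, ∃ x : Fin n × Fin 4 → ℝ,
      (pRep H J K A).mulVec x = fun row => pRep H J K b row t' := by
  have hdim : Module.finrank ℝ (Quaternion ℝ) = Fintype.card (Fin 4) := by
    simp [Quaternion.finrank_eq_four]
  obtain ⟨c, i⟩ := t
  rintro ⟨c', i'⟩
  obtain rfl := Subsingleton.elim c c'
  simp only [pRep_eq_blockRep hH hJ hK hHJK] at h ⊢
  rw [exists_blockRep_mulVec_eq_col_iff _ hdim] at h ⊢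
  exact h
end

section
/- (Corollary to Theorem 3.1) Let (H,J,K) and (H̃,J̃,K̃) be two triples of 4×4 real matrices, each satisfying the Hamiltonian conditions (H² = J² = K² = HJK = −E and H̃² = J̃² = K̃² = H̃J̃K̃ = −E), with associated block maps P and P̃ respectively. If A, B ∈ ℍ^{m×m} satisfy P(A) = P̃(B), then A and B are similar as quaternion matrices: there exists an invertible matrix U ∈ ℍ^{m×m} with U⁻¹AU = B. -/
open Matrix

/-!
Each Hamiltonian triple turns `Q` into an `ℝ`-algebra homomorphism `ℍ → ℝ^{4×4}`, i.e. makes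
`ℝ⁴` a left `ℍ`-module, necessarily free of rank one. Comparing the two orbit maps
`x ↦ Q(x) v` and `x ↦ Q̃(x) v` gives a nonzero `ℝ`-linear `γ : ℍ → ℍ` with `a γ(y) = γ(b y)`
whenever `Q(a) = Q̃(b)`. The twisted trace `u = Σ_{e ∈ {1,i,j,k}} γ(e w) ē` then satisfies
`a u = u b` for all such pairs, and `u ≠ 0` for some `w` because the twisted trace applied
twice is multiplication by `4`. Conjugating by the scalar matrix `u E` carries `A` to `B`.
-/

open Quaternion LinearMap

namespace Quaternion

def i : ℍ[ℝ] := ⟨0, 1, 0, 0⟩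
def j : ℍ[ℝ] := ⟨0, 0, 1, 0⟩
def k : ℍ[ℝ] := ⟨0, 0, 0, 1⟩

theorem re_smul_one_add_im_smul_eq (q : ℍ[ℝ]) :
    q.re • 1 + q.imI • i + q.imJ • j + q.imK • k = q := by
  ext <;> simp <;> simp [i, j, k]

theorem i_mul_i : i * i = -1 := by ext <;> simp <;> simp [i]
theorem i_mul_j : i * j = k := by ext <;> simp <;> simp [i, j, k]
theorem i_mul_k : i * k = -j := by ext <;> simp <;> simp [i, j, k]
theorem j_mul_i : j * i = -k := by ext <;> simp <;> simp [i, j, k]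
theorem j_mul_j : j * j = -1 := by ext <;> simp <;> simp [j]
theorem j_mul_k : j * k = i := by ext <;> simp <;> simp [i, j, k]
theorem k_mul_i : k * i = j := by ext <;> simp <;> simp [i, j, k]
theorem k_mul_j : k * j = -i := by ext <;> simp <;> simp [i, j, k]
theorem k_mul_k : k * k = -1 := by ext <;> simp <;> simp [k]

noncomputable def twistedTrace (γ : ℍ[ℝ] →ₗ[ℝ] ℍ[ℝ]) : ℍ[ℝ] →ₗ[ℝ] ℍ[ℝ] :=
  γ - mulRight ℝ i ∘ₗ γ ∘ₗ mulLeft ℝ i - mulRight ℝ j ∘ₗ γ ∘ₗ mulLeft ℝ j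
    - mulRight ℝ k ∘ₗ γ ∘ₗ mulLeft ℝ k

theorem twistedTrace_apply (γ : ℍ[ℝ] →ₗ[ℝ] ℍ[ℝ]) (w : ℍ[ℝ]) :
    twistedTrace γ w = γ w - γ (i * w) * i - γ (j * w) * j - γ (k * w) * k :=
  rfl

theorem twistedTrace_mulLeft_comp (γ : ℍ[ℝ] →ₗ[ℝ] ℍ[ℝ]) (a w : ℍ[ℝ]) :
    twistedTrace (mulLeft ℝ a ∘ₗ γ) w = a * twistedTrace γ w := by
  simp only [twistedTrace_apply, LinearMap.comp_apply, mulLeft_apply, mul_sub, mul_assoc]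

theorem twistedTrace_comp_mulLeft (γ : ℍ[ℝ] →ₗ[ℝ] ℍ[ℝ]) (q w : ℍ[ℝ]) :
    twistedTrace (γ ∘ₗ mulLeft ℝ q) w = twistedTrace γ w * q := by
  rw [← re_smul_one_add_im_smul_eq q]
  simp only [twistedTrace_apply, LinearMap.comp_apply, mulLeft_apply, add_mul, smul_mul_assoc,
    one_mul, map_add, map_smul, ← mul_assoc, i_mul_i, i_mul_j, i_mul_k, j_mul_i, j_mul_j, j_mul_k,
    k_mul_i, k_mul_j, k_mul_k, neg_mul, map_neg]
  simp only [mul_assoc, mul_add, mul_smul_comm, sub_mul, i_mul_i, i_mul_j, i_mul_k, j_mul_i,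
    j_mul_j, j_mul_k, k_mul_i, k_mul_j, k_mul_k, mul_neg, mul_one]
  module

theorem twistedTrace_twistedTrace (γ : ℍ[ℝ] →ₗ[ℝ] ℍ[ℝ]) :
    twistedTrace (twistedTrace γ) = (4 : ℝ) • γ := by
  refine LinearMap.ext fun w => ?_
  simp only [twistedTrace_apply, ← mul_assoc, i_mul_i, i_mul_j, i_mul_k, j_mul_i, j_mul_j, j_mul_k,
    k_mul_i, k_mul_j, k_mul_k, neg_mul, map_neg, one_mul, sub_mul]
  simp only [mul_assoc, i_mul_i, i_mul_j, i_mul_k, j_mul_i, j_mul_j, j_mul_k, k_mul_i, k_mul_j,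
    k_mul_k, mul_neg, mul_one, neg_neg, LinearMap.smul_apply]
  module

theorem exists_ne_zero_mul_eq_mul_of_mulLeft_comp_eq (γ : ℍ[ℝ] →ₗ[ℝ] ℍ[ℝ]) (hγ : γ ≠ 0) :
    ∃ u ≠ 0, ∀ a b : ℍ[ℝ], mulLeft ℝ a ∘ₗ γ = γ ∘ₗ mulLeft ℝ b → a * u = u * b := by
  have htr : twistedTrace γ ≠ 0 := by
    intro h
    have h4 := twistedTrace_twistedTrace γ
    rw [h] at h4
    exact hγ (by simpa [twistedTrace, eq_comm] using h4)
  obtain ⟨w, hw⟩ : ∃ w, twistedTrace γ w ≠ 0 := by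
    by_contra! h
    exact htr (LinearMap.ext h)
  refine ⟨twistedTrace γ w, hw, fun a b hab => ?_⟩
  rw [← twistedTrace_mulLeft_comp, hab, twistedTrace_comp_mulLeft]

end Quaternion

section OrbitMap

variable {F D V : Type*} [DivisionRing D] [AddCommGroup V]

theorem injective_applyₗ_comp_algHom [CommRing F] [Algebra F D] [Module F V]
    (ρ : D →ₐ[F] Module.End F V) {v : V} (hv : v ≠ 0) :
    Function.Injective (applyₗ v ∘ₗ ρ.toLinearMap) := by
  rw [← ker_eq_bot, ker_eq_bot']
  intro x hx
  by_contra hx0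
  apply hv
  calc v = ρ (x⁻¹ * x) v := by rw [inv_mul_cancel₀ hx0, map_one, Module.End.one_apply]
    _ = ρ x⁻¹ (ρ x v) := by rw [map_mul, Module.End.mul_apply]
    _ = 0 := by simpa using congrArg (ρ x⁻¹) hx

theorem exists_ne_zero_mulLeft_comp_eq_comp_mulLeft [Field F] [Algebra F D] [Module F V]
    [FiniteDimensional F D] [FiniteDimensional F V] (ρ ρ' : D →ₐ[F] Module.End F V)
    (hV : Module.finrank F D = Module.finrank F V) :
    ∃ γ : D →ₗ[F] D, γ ≠ 0 ∧ ∀ a b, ρ a = ρ' b → mulLeft F a ∘ₗ γ = γ ∘ₗ mulLeft F b := by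
  have : Nontrivial V := Module.nontrivial_of_finrank_pos (hV ▸ Module.finrank_pos)
  obtain ⟨v, hv⟩ := exists_ne (0 : V)
  set e := linearEquivOfInjective _ (injective_applyₗ_comp_algHom ρ hv) hV
  have he_mul : ∀ x z, e (x * z) = ρ x (e z) := fun x z => by
    simp only [e, linearEquivOfInjective_apply, LinearMap.comp_apply, applyₗ_apply_apply,
      AlgHom.toLinearMap_apply, map_mul, Module.End.mul_apply]
  refine ⟨e.symm.toLinearMap ∘ₗ applyₗ v ∘ₗ ρ'.toLinearMap, ?_, fun a b hab => ?_⟩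
  · intro h
    simpa [hv] using congrArg (e ∘ fun γ => γ 1) h
  · refine LinearMap.ext fun y => e.injective ?_
    simp only [LinearMap.comp_apply, mulLeft_apply, he_mul, LinearEquiv.coe_coe,
      e.apply_symm_apply, applyₗ_apply_apply, AlgHom.toLinearMap_apply, hab, map_mul,
      Module.End.mul_apply]

end OrbitMap

theorem Quaternion.exists_ne_zero_mul_eq_mul_of_algHom_eq {V : Type*} [AddCommGroup V]
    [Module ℝ V] [FiniteDimensional ℝ V] (ρ ρ' : ℍ[ℝ] →ₐ[ℝ] Module.End ℝ V)
    (hV : Module.finrank ℝ V = 4) : ∃ u ≠ 0, ∀ a b : ℍ[ℝ], ρ a = ρ' b → a * u = u * b := by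
  obtain ⟨γ, hγ, hcomm⟩ :=
    exists_ne_zero_mulLeft_comp_eq_comp_mulLeft ρ ρ' (by rw [finrank_eq_four, hV])
  obtain ⟨u, hu, hmul⟩ := exists_ne_zero_mul_eq_mul_of_mulLeft_comp_eq γ hγ
  exact ⟨u, hu, fun a b hab => hmul a b (hcomm a b hab)⟩

section HamiltonTriple

variable {R A : Type*} [CommRing R] [Ring A] [Algebra R A] {H J K : A}

def hamiltonBasis (hH : H * H = -1) (hJ : J * J = -1) (hK : K * K = -1)
    (hHJK : H * J * K = -1) : QuaternionAlgebra.Basis A (-1 : R) 0 (-1) where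
  i := H
  j := J
  k := K
  i_mul_i := by simp [hH]
  j_mul_j := by simp [hJ]
  i_mul_j := calc
    H * J = -(H * J * K * K) := by rw [mul_assoc _ K, hK, mul_neg_one, neg_neg]
    _ = K := by rw [hHJK, neg_one_mul, neg_neg]
  j_mul_i := by
    have hJK : J * K = H := calc
      J * K = -(H * H) * (J * K) := by rw [hH, neg_neg, one_mul]
      _ = -(H * (H * J * K)) := by noncomm_ring
      _ = H := by rw [hHJK, mul_neg_one, neg_neg]
    rw [zero_smul, zero_sub, ← hJK, ← mul_assoc, hJ, neg_one_mul]

end HamiltonTriple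

noncomputable def qRepHom {H J K : Matrix (Fin 4) (Fin 4) ℝ} (hH : H * H = -1) (hJ : J * J = -1)
    (hK : K * K = -1) (hHJK : H * J * K = -1) : ℍ[ℝ] →ₐ[ℝ] Matrix (Fin 4) (Fin 4) ℝ :=
  (hamiltonBasis hH hJ hK hHJK).liftHom

theorem qRepHom_apply {H J K : Matrix (Fin 4) (Fin 4) ℝ} (hH : H * H = -1) (hJ : J * J = -1)
    (hK : K * K = -1) (hHJK : H * J * K = -1) (q : ℍ[ℝ]) :
    qRepHom hH hJ hK hHJK q = qRep H J K q := by
  change (hamiltonBasis hH hJ hK hHJK).lift q = _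
  simp [QuaternionAlgebra.Basis.lift, hamiltonBasis, qRep, Algebra.algebraMap_eq_smul_one]

theorem qRep_eq_of_pRep_eq {H J K H' J' K' : Matrix (Fin 4) (Fin 4) ℝ} {m n : ℕ}
    {A B : Matrix (Fin m) (Fin n) ℍ[ℝ]} (hAB : pRep H J K A = pRep H' J' K' B) (s : Fin m)
    (t : Fin n) : qRep H J K (A s t) = qRep H' J' K' (B s t) := by
  ext x y
  exact congrFun (congrFun hAB (s, x)) (t, y)

theorem Matrix.exists_similar_of_mul_eq_mul {D n : Type*} [DivisionRing D] [Fintype n]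
    [DecidableEq n] {A B : Matrix n n D} {u : D} (hu : u ≠ 0) (h : ∀ s t, A s t * u = u * B s t) :
    ∃ U V : Matrix n n D, U * V = 1 ∧ V * U = 1 ∧ V * A * U = B := by
  refine ⟨diagonal fun _ => u, diagonal fun _ => u⁻¹, by simp [hu], by simp [hu], ?_⟩
  ext s t
  rw [mul_diagonal, diagonal_mul, mul_assoc, h, ← mul_assoc, inv_mul_cancel₀ hu, one_mul]

/-- Corollary to Theorem 3.1: if `P(A) = P̃(B)` for two
Hamiltonian triples, then `A` and `B` are similar quaternion matrices. -/
theorem similar_of_pRep_eq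
    (H J K H' J' K' : Matrix (Fin 4) (Fin 4) ℝ)
    (hH : H * H = -1) (hJ : J * J = -1) (hK : K * K = -1)
    (hHJK : H * J * K = -1)
    (hH' : H' * H' = -1) (hJ' : J' * J' = -1) (hK' : K' * K' = -1)
    (hHJK' : H' * J' * K' = -1) {m : ℕ}
    (A B : Matrix (Fin m) (Fin m) (Quaternion ℝ))
    (hAB : pRep H J K A = pRep H' J' K' B) :
    ∃ U V : Matrix (Fin m) (Fin m) (Quaternion ℝ),
      U * V = 1 ∧ V * U = 1 ∧ V * A * U = B := by
  obtain ⟨u, hu, hcomm⟩ := exists_ne_zero_mul_eq_mul_of_algHom_eq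
    (toLinAlgEquiv'.toAlgHom.comp (qRepHom hH hJ hK hHJK))
    (toLinAlgEquiv'.toAlgHom.comp (qRepHom hH' hJ' hK' hHJK')) (Module.finrank_fin_fun ℝ)
  refine exists_similar_of_mul_eq_mul hu fun s t => hcomm _ _ ?_
  simp only [AlgHom.comp_apply, qRepHom_apply, qRep_eq_of_pRep_eq hAB]
end
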